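/- arXiv:2508.06792 — 2 statements merged into one kernel-verified Lean document; each statement's English description precedes it below -/
import Mathlib

section
/- Every value in the interval [1/√2, ∞) is attained by the h* statistic: for every real number c ≥ 1/√2 there exist three real numbers x_1, x_2, x_3 with x_3 = max{x_1, x_2, x_3} and x_1 ≠ x_2 whose h* statistic (with m = 3) equals c. Consequently the range of h* is exactly [1/√2, ∞). -/
open Finset Real

/-- Sum of squared pairwise differences over all unordered pairs of distinct
indices, both different from the reference index `m`. -/
noncomputable def pairSum {n : ℕ} (x : Fin n → ℝ) (m : Fin n) : ℝ :=
  ∑ p ∈ Finset.univ.filter (fun p : Fin n × Fin n => p.1 < p.2 ∧ p.1 ≠ m ∧ p.2 ≠ m),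
    (x p.1 - x p.2) ^ 2

/-- The h* statistic with reference index `m`. -/
noncomputable def hstar {n : ℕ} (x : Fin n → ℝ) (m : Fin n) : ℝ :=
  Real.sqrt (((∑ k, (x k - x m) ^ 2) / ((n : ℝ) - 1)) /
    (pairSum x m / (((n : ℝ) - 1) * ((n : ℝ) - 2) / 2)))

/-!
Write `y k = x m - x k ≥ 0`. Since `y i * y j ≥ 0`, each pair `i < j` avoiding `m` contributes
`(y i - y j) ^ 2 ≤ y i ^ 2 + y j ^ 2`, and each index `k ≠ m` lies in `n - 2` such pairs, so
the pair sum is at most `(n - 2) * ∑ k, y k ^ 2`; by the definition of `h*` this is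
`h* ^ 2 ≥ 1 / 2`. Conversely, for `r ≥ 1` the triple `(-(r + 1) / 2, -(r - 1) / 2, 0)` has
`h* ^ 2 = (r ^ 2 + 1) / 4`, which takes every value `≥ 1 / 2`.
-/

namespace Finset

variable {ι : Type*}

theorem sum_offDiag_filter_lt_add [LinearOrder ι] {M : Type*} [AddCommMonoid M]
    (s : Finset ι) (f : ι → ι → M) :
    ∑ p ∈ s.offDiag with p.1 < p.2, (f p.1 p.2 + f p.2 p.1) =
      ∑ p ∈ s.offDiag, f p.1 p.2 := by
  rw [sum_add_distrib, ← sum_filter_add_sum_filter_not s.offDiag (fun p => p.1 < p.2)]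
  congr 1
  refine sum_nbij' Prod.swap Prod.swap ?_ ?_ (by simp) (by simp) (by simp)
  · intro p hp
    simp only [mem_filter, mem_offDiag] at hp ⊢
    exact ⟨⟨hp.1.2.1, hp.1.1, hp.1.2.2.symm⟩, hp.2.not_gt⟩
  · intro p hp
    simp only [mem_filter, mem_offDiag, not_lt] at hp ⊢
    exact ⟨⟨hp.1.2.1, hp.1.1, hp.1.2.2.symm⟩, hp.2.lt_of_ne hp.1.2.2.symm⟩

theorem sum_offDiag_fst {R : Type*} [CommRing R] [DecidableEq ι] (s : Finset ι) (f : ι → R) :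
    ∑ p ∈ s.offDiag, f p.1 = ((#s : R) - 1) * ∑ i ∈ s, f i := by
  have h := sum_union (disjoint_diag_offDiag s) (f := fun p => f p.1)
  rw [diag_union_offDiag, sum_product, sum_diag] at h
  simp only [sum_const, nsmul_eq_mul] at h
  rw [sub_one_mul, mul_sum, h]
  ring

theorem sum_offDiag_filter_lt_sq_sub_le [LinearOrder ι] [DecidableEq ι] (s : Finset ι)
    (y : ι → ℝ) (c : ℝ) (hy : ∀ i ∈ s, y i ≤ c) :
    ∑ p ∈ s.offDiag with p.1 < p.2, (y p.1 - y p.2) ^ 2 ≤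
      ((#s : ℝ) - 1) * ∑ i ∈ s, (y i - c) ^ 2 := by
  calc ∑ p ∈ s.offDiag with p.1 < p.2, (y p.1 - y p.2) ^ 2
      ≤ ∑ p ∈ s.offDiag with p.1 < p.2, ((y p.1 - c) ^ 2 + (y p.2 - c) ^ 2) := by
        refine sum_le_sum fun p hp => ?_
        simp only [mem_filter, mem_offDiag] at hp
        nlinarith [mul_nonneg (sub_nonneg.2 (hy _ hp.1.1)) (sub_nonneg.2 (hy _ hp.1.2.1))]
    _ = ((#s : ℝ) - 1) * ∑ i ∈ s, (y i - c) ^ 2 := by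
        rw [sum_offDiag_filter_lt_add s (fun i _ => (y i - c) ^ 2)]
        exact sum_offDiag_fst s fun i => (y i - c) ^ 2

end Finset

theorem pairSum_eq_sum_offDiag {n : ℕ} (x : Fin n → ℝ) (m : Fin n) :
    pairSum x m = ∑ p ∈ (univ.erase m).offDiag with p.1 < p.2, (x p.1 - x p.2) ^ 2 := by
  rw [pairSum]
  congr 1
  ext p
  simp only [mem_filter, mem_univ, true_and, mem_offDiag, mem_erase]
  exact ⟨fun ⟨hlt, h1, h2⟩ => ⟨⟨⟨h1, trivial⟩, ⟨h2, trivial⟩, hlt.ne⟩, hlt⟩,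
    fun ⟨⟨⟨h1, _⟩, ⟨h2, _⟩, _⟩, hlt⟩ => ⟨hlt, h1, h2⟩⟩

theorem pairSum_le_mul_sum_sq {n : ℕ} (x : Fin n → ℝ) (m : Fin n)
    (hmax : ∀ k, x k ≤ x m) :
    pairSum x m ≤ ((n : ℝ) - 2) * ∑ k, (x k - x m) ^ 2 := by
  have hcard : ((#(univ.erase m) : ℕ) : ℝ) - 1 = (n : ℝ) - 2 := by
    rw [cast_card_erase_of_mem (mem_univ m), card_univ, Fintype.card_fin]
    ring
  rw [pairSum_eq_sum_offDiag, ← sum_erase univ (a := m) (by simp), ← hcard]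
  exact sum_offDiag_filter_lt_sq_sub_le _ x _ fun k _ => hmax k

theorem pairSum_pos {n : ℕ} (x : Fin n → ℝ) {m i j : Fin n} (hi : i ≠ m) (hj : j ≠ m)
    (hij : x i ≠ x j) : 0 < pairSum x m := by
  obtain ⟨i, j, hlt, hi, hj, hij⟩ : ∃ i j, i < j ∧ i ≠ m ∧ j ≠ m ∧ x i ≠ x j := by
    rcases lt_or_gt_of_ne (ne_of_apply_ne x hij) with h | h
    exacts [⟨i, j, h, hi, hj, hij⟩, ⟨j, i, h, hj, hi, hij.symm⟩]
  exact sum_pos' (fun _ _ => sq_nonneg _) ⟨(i, j), by simp [hlt, hi, hj],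
    sq_pos_of_ne_zero (sub_ne_zero.2 hij)⟩

theorem one_div_sqrt_two_le_hstar {n : ℕ} (hn : 3 ≤ n) (x : Fin n → ℝ) {m i j : Fin n}
    (hmax : ∀ k, x k ≤ x m) (hi : i ≠ m) (hj : j ≠ m) (hij : x i ≠ x j) :
    1 / √2 ≤ hstar x m := by
  have hP := pairSum_pos x hi hj hij
  have hle := pairSum_le_mul_sum_sq x m hmax
  have hn' : (3 : ℝ) ≤ n := by exact_mod_cast hn
  have hn1 : (n : ℝ) - 1 ≠ 0 := by linarith
  set S := ∑ k, (x k - x m) ^ 2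
  have harg : S / ((n : ℝ) - 1) / (pairSum x m / (((n : ℝ) - 1) * ((n : ℝ) - 2) / 2))
      = ((n : ℝ) - 2) * S / (2 * pairSum x m) := by
    field_simp
  rw [hstar, harg]
  refine le_sqrt_of_sq_le ?_
  rw [div_pow, one_pow, sq_sqrt zero_le_two, le_div_iff₀ (by positivity)]
  linarith

theorem hstar_fin_three (x : Fin 3 → ℝ) :
    hstar x 2 = √(((x 0 - x 2) ^ 2 + (x 1 - x 2) ^ 2) / 2 / (x 0 - x 1) ^ 2) := by
  have hpair : pairSum x 2 = (x 0 - x 1) ^ 2 := by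
    simp [pairSum, sum_filter, Fintype.sum_prod_type, Fin.sum_univ_three]
  rw [hstar, hpair, Fin.sum_univ_three]
  norm_num

theorem exists_hstar_fin_three_eq {c : ℝ} (hc : 1 / √2 ≤ c) :
    ∃ x : Fin 3 → ℝ, (∀ k, x k ≤ x 2) ∧ x 0 ≠ x 1 ∧ hstar x 2 = c := by
  have hc0 : 0 ≤ c := le_trans (by positivity) hc
  have hc2 : 1 / 2 ≤ c ^ 2 := by
    simpa [div_pow, sq_sqrt zero_le_two] using pow_le_pow_left₀ (by positivity) hc 2
  set r := √(4 * c ^ 2 - 1)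
  have hr : r ^ 2 = 4 * c ^ 2 - 1 := sq_sqrt (by linarith)
  have hr1 : 1 ≤ r := le_sqrt_of_sq_le (by linarith)
  refine ⟨![-(r + 1) / 2, -(r - 1) / 2, 0], ?_, ?_, ?_⟩
  · intro k
    fin_cases k <;> simp only [Fin.isValue, Fin.reduceFinMk, Matrix.cons_val] <;> linarith
  · intro h
    simp only [Fin.isValue, Matrix.cons_val_zero, Matrix.cons_val_one] at h
    linarith
  · rw [hstar_fin_three, ← sqrt_sq hc0]
    congr 1
    simp only [Fin.isValue, Matrix.cons_val]
    linear_combination hr / 4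

/-- every `c ≥ 1/√2` is attained by the h* statistic for some triple
`x_1, x_2, x_3` with `x_3` the maximum and `x_1 ≠ x_2`; consequently the range of
h* (over all admissible data sets) is exactly `[1/√2, ∞)`. -/
theorem hstar_surjective_onto_Ici :
    (∀ c : ℝ, 1 / Real.sqrt 2 ≤ c →
      ∃ x : Fin 3 → ℝ, (∀ k, x k ≤ x 2) ∧ x 0 ≠ x 1 ∧ hstar x 2 = c) ∧
    {c : ℝ | ∃ (n : ℕ) (x : Fin n → ℝ) (m : Fin n), 3 ≤ n ∧ (∀ k, x k ≤ x m) ∧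
        (∃ i j, i ≠ m ∧ j ≠ m ∧ x i ≠ x j) ∧ hstar x m = c} =
      Set.Ici (1 / Real.sqrt 2) := by
  refine ⟨fun _ => exists_hstar_fin_three_eq, ?_⟩
  ext c
  constructor
  · rintro ⟨n, x, m, hn, hmax, ⟨i, j, hi, hj, hij⟩, rfl⟩
    exact one_div_sqrt_two_le_hstar hn x hmax hi hj hij
  · intro hc
    obtain ⟨x, hmax, h01, rfl⟩ := exists_hstar_fin_three_eq hc
    exact ⟨3, x, 2, le_rfl, hmax, ⟨0, 1, by decide, by decide, h01⟩, rfl⟩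
end

section
/- Trigonometric representation of h̃*: let u_k = x_m − x_k for each index k ≠ m, Q = Σ_{k≠m} u_k and R² = Σ_{k≠m} u_k², with R > 0 and Q² < (n−1)·R², and set c = Q / (sqrt(n−1) · R). Then 1/sqrt(n−1) ≤ c ≤ 1, and the statistic h̃* = sqrt(2/(n−2))·h* satisfies h̃* = R / sqrt((n−1)·R² − Q²) = 1 / ( sqrt(n−1) · sqrt(1 − c²) ). -/
open Finset Real

/-! With `u k = x m - x k`, the denominator of h* is Lagrange's identity in disguise:
`∑_{i<j} (u i - u j)² = (n-1) R² - Q²`, while its numerator is `R²`; the normalising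
constants cancel against `√(2/(n-2))`. Since the `u k` are nonnegative, `R² ≤ Q²`, which gives
`c ≥ 1/√(n-1)`, and `1 - c² = ((n-1) R² - Q²) / ((n-1) R²)` turns the first formula into the
second. -/

namespace Finset

variable {ι : Type*} (s : Finset ι)

theorem sum_sum_sub_sq {R : Type*} [CommRing R] (f : ι → R) :
    ∑ i ∈ s, ∑ j ∈ s, (f i - f j) ^ 2 =
      2 * (#s * ∑ i ∈ s, f i ^ 2 - (∑ i ∈ s, f i) ^ 2) := by
  simp only [sub_sq, sum_add_distrib, sum_sub_distrib, sum_const, nsmul_eq_mul, ← mul_sum,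
    ← sum_mul]
  ring

variable [LinearOrder ι]

theorem sum_sum_eq_two_nsmul_sum_filter_lt {M : Type*} [AddCommMonoid M] (f : ι → ι → M)
    (hsymm : ∀ i j, f i j = f j i) (hdiag : ∀ i, f i i = 0) :
    ∑ i ∈ s, ∑ j ∈ s, f i j = 2 • ∑ p ∈ s ×ˢ s with p.1 < p.2, f p.1 p.2 := by
  have hswap : ∑ p ∈ s ×ˢ s with p.2 < p.1, f p.1 p.2 =
      ∑ p ∈ s ×ˢ s with p.1 < p.2, f p.1 p.2 :=
    sum_nbij' Prod.swap Prod.swap (by simp +contextual) (by simp +contextual)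
      (by simp) (by simp) (fun p _ => hsymm _ _)
  have hnot_lt : ∑ p ∈ s ×ˢ s with p.2 < p.1, f p.1 p.2 =
      ∑ p ∈ s ×ˢ s with ¬p.1 < p.2, f p.1 p.2 := by
    refine sum_subset (fun p => by simp +contextual [le_of_lt]) fun p hp hp' => ?_
    simp only [mem_filter, not_and, not_lt] at hp hp'
    rw [le_antisymm (hp' hp.1) hp.2, hdiag]
  rw [← sum_product', ← sum_filter_add_sum_filter_not _ (fun p : ι × ι => p.1 < p.2),
    ← hnot_lt, hswap, two_nsmul]

theorem sum_filter_lt_sub_sq {R : Type*} [CommRing R] [IsAddTorsionFree R] (f : ι → R) :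
    ∑ p ∈ s ×ˢ s with p.1 < p.2, (f p.1 - f p.2) ^ 2 =
      #s * ∑ i ∈ s, f i ^ 2 - (∑ i ∈ s, f i) ^ 2 := by
  refine nsmul_right_injective two_ne_zero ?_
  dsimp only
  rw [← sum_sum_eq_two_nsmul_sum_filter_lt s (fun i j => (f i - f j) ^ 2)
      (fun i j => sub_sq_comm _ _) (by simp),
    sum_sum_sub_sq, two_nsmul, two_mul]

end Finset

namespace Real

theorem one_div_sqrt_le_div_sqrt_mul_sqrt {N R Q : ℝ} (hN : 0 < N) (hR : 0 < R) (hQ : 0 ≤ Q)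
    (hRQ : R ≤ Q ^ 2) : 1 / √N ≤ Q / (√N * √R) := by
  have hsqrtR : √R ≤ Q := (sqrt_le_left hQ).2 hRQ
  calc 1 / √N = √R / (√N * √R) := by field_simp
    _ ≤ Q / (√N * √R) := by gcongr

theorem div_sqrt_mul_sqrt_le_one {N R Q : ℝ} (hN : 0 ≤ N) (hQR : Q ^ 2 ≤ N * R) :
    Q / (√N * √R) ≤ 1 :=
  div_le_one_of_le₀ ((le_abs_self Q).trans (sqrt_mul hN R ▸ abs_le_sqrt hQR)) (by positivity)

theorem sqrt_div_sqrt_mul_sub_sq {N R Q : ℝ} (hN : 0 < N) (hR : 0 < R) :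
    √R / √(N * R - Q ^ 2) = 1 / (√N * √(1 - (Q / (√N * √R)) ^ 2)) := by
  have hc : 1 - (Q / (√N * √R)) ^ 2 = (N * R - Q ^ 2) / (N * R) := by
    rw [div_pow, mul_pow, sq_sqrt hN.le, sq_sqrt hR.le]
    field_simp
  have hsqrtN : √N ≠ 0 := (sqrt_pos.2 hN).ne'
  rw [hc, sqrt_div' _ (by positivity), sqrt_mul hN.le, mul_div_assoc', mul_div_mul_left _ _ hsqrtN,
    one_div_div]

end Real

section HStar

variable {n : ℕ} (x : Fin n → ℝ) (m : Fin n)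

theorem pairSum_eq :
    pairSum x m = ((n : ℝ) - 1) * ∑ k ∈ univ.filter (fun k => k ≠ m), (x m - x k) ^ 2 -
      (∑ k ∈ univ.filter (fun k => k ≠ m), (x m - x k)) ^ 2 := by
  have hcard : (#(univ.filter fun k => k ≠ m) : ℝ) = n - 1 := by
    rw [filter_ne', card_erase_of_mem (mem_univ m), card_univ, Fintype.card_fin,
      Nat.cast_pred m.pos]
  rw [← hcard, ← sum_filter_lt_sub_sq, pairSum]
  refine sum_congr ?_ fun p _ => by ring
  ext p
  simp only [mem_filter, mem_univ, mem_product, true_and]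
  tauto

theorem sum_sub_sq_eq_sum_filter_ne :
    ∑ k, (x k - x m) ^ 2 = ∑ k ∈ univ.filter (fun k => k ≠ m), (x m - x k) ^ 2 := by
  rw [filter_ne', sum_erase _ (by simp)]
  exact sum_congr rfl fun k _ => sub_sq_comm _ _

theorem sqrt_two_div_mul_hstar (hn : 2 < n) :
    √(2 / ((n : ℝ) - 2)) * hstar x m = √((∑ k, (x k - x m) ^ 2) / pairSum x m) := by
  have hn2 : (0 : ℝ) < n - 2 := by
    rw [sub_pos]
    exact_mod_cast hn
  have hn1 : (0 : ℝ) < n - 1 := by linarith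
  rw [hstar, ← sqrt_mul (by positivity)]
  congr 1
  field_simp

end HStar

/-- trigonometric representation of h̃*. -/
theorem htilde_trig_repr {n : ℕ} (hn : 3 ≤ n) (x : Fin n → ℝ) (m : Fin n)
    (hmax : ∀ k, x k ≤ x m)
    (Q R2 : ℝ)
    (hQ : Q = ∑ k ∈ Finset.univ.filter (fun k => k ≠ m), (x m - x k))
    (hR2 : R2 = ∑ k ∈ Finset.univ.filter (fun k => k ≠ m), (x m - x k) ^ 2)
    (hRpos : 0 < R2)
    (hQlt : Q ^ 2 < ((n : ℝ) - 1) * R2)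
    (c : ℝ) (hc : c = Q / (Real.sqrt ((n : ℝ) - 1) * Real.sqrt R2)) :
    1 / Real.sqrt ((n : ℝ) - 1) ≤ c ∧ c ≤ 1 ∧
    Real.sqrt (2 / ((n : ℝ) - 2)) * hstar x m =
      Real.sqrt R2 / Real.sqrt (((n : ℝ) - 1) * R2 - Q ^ 2) ∧
    Real.sqrt (2 / ((n : ℝ) - 2)) * hstar x m =
      1 / (Real.sqrt ((n : ℝ) - 1) * Real.sqrt (1 - c ^ 2)) := by
  have hN : (0 : ℝ) < n - 1 := by
    rw [sub_pos]
    exact_mod_cast (by omega : 1 < n)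
  have hu : ∀ k ∈ univ.filter (fun k => k ≠ m), 0 ≤ x m - x k := fun k _ => sub_nonneg.2 (hmax k)
  have hQ0 : 0 ≤ Q := hQ ▸ sum_nonneg hu
  have hRQ : R2 ≤ Q ^ 2 := hQ ▸ hR2 ▸ sum_sq_le_sq_sum_of_nonneg hu
  have hformula : √(2 / ((n : ℝ) - 2)) * hstar x m = √R2 / √(((n : ℝ) - 1) * R2 - Q ^ 2) := by
    rw [sqrt_two_div_mul_hstar x m hn, sum_sub_sq_eq_sum_filter_ne, pairSum_eq, ← hQ, ← hR2,
      sqrt_div hRpos.le]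
  subst hc
  exact ⟨one_div_sqrt_le_div_sqrt_mul_sqrt hN hRpos hQ0 hRQ, div_sqrt_mul_sqrt_le_one hN.le hQlt.le,
    hformula, hformula.trans (sqrt_div_sqrt_mul_sub_sq hN hRpos)⟩
end
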